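/- arXiv:0802.1506 — 3 statements merged into one kernel-verified Lean document; each statement's English description precedes it below -/
import Mathlib

section
/- The number of rooted spanning forests of the complete graph on n labeled vertices with exactly r trees (each tree having a distinguished root) equals binomial(n-1, r-1) * n^(n-r). -/
/-!
A rooted forest on `V` is the same thing as a map `f : V → V` from which every point eventually
reaches a fixed point: `f` sends a vertex to its parent, the roots are the fixed points, and the
forest is the functional graph of `f`.

Let `A r` be the number of such maps with `r` fixed points and `n = |V|`. Redirecting a root `ρ`
to a vertex `v` outside its tree turns a map with `r + 1` fixed points into a map with `r` fixed
points together with the marked non-fixed point `ρ`, and cutting `ρ` off its new parent `v`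
recovers the original map. The trees of the `r + 1` roots partition `V`, so there are `(r + 1) n - n` choices of
`(ρ, v)`, whence `A (r + 1) * (r * n) = A r * (n - r)`. Starting from `A n = 1` (only the identity
has `n` fixed points), this recursion gives `A r = C(n - 1, r - 1) * n ^ (n - r)`.
-/

namespace Function

variable {V : Type*} {f : V → V}

def ReachesFixedPt (f : V → V) : Prop := ∀ v, ∃ k, IsFixedPt f (f^[k] v)

namespace ReachesFixedPt

theorem induction (hf : ReachesFixedPt f) {P : V → Prop} (fixed : ∀ v, IsFixedPt f v → P v)
    (step : ∀ v, ¬IsFixedPt f v → P (f v) → P v) (v : V) : P v := by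
  obtain ⟨k, hk⟩ := hf v
  induction k generalizing v with
  | zero => exact fixed v hk
  | succ k ih =>
    by_cases hv : IsFixedPt f v
    · exact fixed v hv
    · exact step v hv (ih (f v) (by rwa [← iterate_succ_apply]))

theorem of_apply_lt (h : V → ℕ) (hlt : ∀ v, ¬IsFixedPt f v → h (f v) < h v) :
    ReachesFixedPt f := by
  intro v
  induction hv : h v using Nat.strong_induction_on generalizing v with
  | _ m ih =>
    by_cases hfix : IsFixedPt f v
    · exact ⟨0, hfix⟩
    · obtain ⟨k, hk⟩ := ih _ (hv ▸ hlt v hfix) (f v) rfl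
      exact ⟨k + 1, by rwa [iterate_succ_apply]⟩

theorem isFixedPt_of_isPeriodicPt (hf : ReachesFixedPt f) {v : V} {m : ℕ} (hm : 0 < m)
    (hv : IsPeriodicPt f m v) : IsFixedPt f v := by
  obtain ⟨k, hk⟩ := hf v
  rw [← (hv.mul_const k).eq, ← Nat.sub_add_cancel (Nat.le_mul_of_pos_left k hm),
    iterate_add_apply, (hk.iterate _).eq]
  exact hk

theorem iterate_apply_ne (hf : ReachesFixedPt f) {u : V} (hu : ¬IsFixedPt f u) (j : ℕ) :
    f^[j] (f u) ≠ u := fun h =>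
  hu (hf.isFixedPt_of_isPeriodicPt j.succ_pos (by rwa [IsPeriodicPt, IsFixedPt, iterate_succ_apply]))

noncomputable def root (hf : ReachesFixedPt f) (v : V) : V := f^[(hf v).choose] v

variable (hf : ReachesFixedPt f)

theorem isFixedPt_root (v : V) : IsFixedPt f (hf.root v) := (hf v).choose_spec

theorem root_eq_iterate {v : V} {k : ℕ} (hk : IsFixedPt f (f^[k] v)) : hf.root v = f^[k] v := by
  have stays : ∀ {i j : ℕ}, i ≤ j → IsFixedPt f (f^[i] v) → f^[j] v = f^[i] v := by
    intro i j hij hi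
    rw [← Nat.sub_add_cancel hij, iterate_add_apply, (hi.iterate _).eq]
  rcases le_total k (hf v).choose with h | h
  · exact stays h hk
  · exact (stays h (hf.isFixedPt_root v)).symm

theorem root_eq_self_iff {v : V} : hf.root v = v ↔ IsFixedPt f v :=
  ⟨fun h => h ▸ hf.isFixedPt_root v, fun h => hf.root_eq_iterate (k := 0) h⟩

theorem root_apply (v : V) : hf.root (f v) = hf.root v := by
  obtain ⟨k, hk⟩ := hf (f v)
  rw [hf.root_eq_iterate hk, hf.root_eq_iterate (k := k + 1) (by rwa [iterate_succ_apply]),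
    iterate_succ_apply]

theorem root_iterate (v : V) (k : ℕ) : hf.root (f^[k] v) = hf.root v := by
  induction k with
  | zero => rfl
  | succ k ih => rw [iterate_succ_apply', root_apply, ih]

theorem iterate_ne_of_root_ne {ρ v : V} (hρ : IsFixedPt f ρ) (hv : hf.root v ≠ ρ) (k : ℕ) :
    f^[k] v ≠ ρ := fun h => hv (by rw [← hf.root_iterate v k, h, hf.root_eq_self_iff.2 hρ])

end ReachesFixedPt

section Update

variable [DecidableEq V]

theorem iterate_update_of_forall_iterate_ne {a b w : V} (hw : ∀ j, f^[j] w ≠ a) (k : ℕ) :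
    (update f a b)^[k] w = f^[k] w := by
  induction k with
  | zero => rfl
  | succ k ih => rw [iterate_succ_apply', iterate_succ_apply', ih, update_of_ne (hw k)]

theorem fixedPoints_update_of_ne {ρ v : V} (hρ : IsFixedPt f ρ) (hv : v ≠ ρ) :
    fixedPoints (update f ρ v) = fixedPoints f \ {ρ} := by
  ext w
  by_cases hw : w = ρ
  · subst hw
    simp [IsFixedPt, hv]
  · simp [IsFixedPt, hw]

theorem fixedPoints_update_self (u : V) :
    fixedPoints (update f u u) = insert u (fixedPoints f) := by
  ext w
  by_cases hw : w = u
  · subst hw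
    simp [IsFixedPt]
  · simp [IsFixedPt, hw]

theorem ReachesFixedPt.update_of_root_ne (hf : ReachesFixedPt f) {ρ v : V} (hρ : IsFixedPt f ρ)
    (hv : hf.root v ≠ ρ) : ReachesFixedPt (update f ρ v) := by
  have hv_reaches : ∃ k, IsFixedPt (update f ρ v) ((update f ρ v)^[k] v) := by
    obtain ⟨k, hk⟩ := hf v
    refine ⟨k, ?_⟩
    rw [iterate_update_of_forall_iterate_ne (hf.iterate_ne_of_root_ne hρ hv), IsFixedPt,
      update_of_ne (hf.iterate_ne_of_root_ne hρ hv k), hk.eq]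
  refine hf.induction (fun w hw => ?_) (fun w hw ⟨k, hk⟩ => ?_)
  · by_cases hwρ : w = ρ
    · obtain ⟨k, hk⟩ := hv_reaches
      exact ⟨k + 1, by rwa [iterate_succ_apply, hwρ, update_self]⟩
    · exact ⟨0, by rw [iterate_zero_apply, IsFixedPt, update_of_ne hwρ, hw.eq]⟩
  · have hwρ : w ≠ ρ := fun h => hw (h ▸ hρ)
    exact ⟨k + 1, by rwa [iterate_succ_apply, update_of_ne hwρ]⟩

theorem ReachesFixedPt.update_self (hf : ReachesFixedPt f) (u : V) :
    ReachesFixedPt (update f u u) := by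
  refine hf.induction (fun w hw => ⟨0, ?_⟩) (fun w hw ⟨k, hk⟩ => ?_)
  · by_cases hwu : w = u
    · subst hwu
      exact Function.update_self _ _ _
    · rw [iterate_zero_apply, IsFixedPt, update_of_ne hwu, hw.eq]
  · by_cases hwu : w = u
    · exact ⟨0, by subst hwu; exact Function.update_self _ _ _⟩
    · exact ⟨k + 1, by rwa [iterate_succ_apply, update_of_ne hwu]⟩

theorem ReachesFixedPt.root_update_self_apply_ne (hf : ReachesFixedPt f) {u : V}
    (hu : ¬IsFixedPt f u) (hf' : ReachesFixedPt (update f u u)) : hf'.root (f u) ≠ u := by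
  rw [ReachesFixedPt.root, iterate_update_of_forall_iterate_ne (hf.iterate_apply_ne hu)]
  exact hf.iterate_apply_ne hu _

end Update

end Function

namespace SimpleGraph

open Function

variable {V : Type*} {f : V → V}

def functionalGraph (f : V → V) : SimpleGraph V := fromRel fun a b => f a = b

theorem functionalGraph_adj {a b : V} :
    (functionalGraph f).Adj a b ↔ a ≠ b ∧ (f a = b ∨ f b = a) :=
  fromRel_adj _ a b

theorem functionalGraph_adj_apply {v : V} (hv : ¬IsFixedPt f v) :
    (functionalGraph f).Adj v (f v) :=
  functionalGraph_adj.2 ⟨Ne.symm hv, Or.inl rfl⟩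

theorem IsAcyclic.snd_eq_or_snd_eq_of_adj {G : SimpleGraph V} (hG : G.IsAcyclic) {a b x : V}
    {p : G.Walk a x} {q : G.Walk b x} (hp : p.IsPath) (hq : q.IsPath) (hab : G.Adj a b) :
    p.snd = b ∨ q.snd = a := by
  classical
  by_cases hb : b ∈ p.support
  · exact Or.inl (hG.eq_snd_of_adj_start hp hab hb).symm
  · have ha : a ∈ q.reverse.support := hG.mem_support_of_ne_mem_support_of_adj_of_isPath
      hq.reverse hp.reverse hab.symm (by rwa [Walk.support_reverse, List.mem_reverse])
    rw [Walk.support_reverse, List.mem_reverse] at ha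
    exact Or.inr (hG.eq_snd_of_adj_start hq hab.symm ha).symm

section RootedForest

variable {G : SimpleGraph V} {root : G.ConnectedComponent → V}

def treeRoot (root : G.ConnectedComponent → V) (v : V) : V := root (G.connectedComponentMk v)

theorem treeRoot_eq_of_adj {a b : V} (hab : G.Adj a b) : treeRoot root a = treeRoot root b := by
  rw [treeRoot, treeRoot, ConnectedComponent.connectedComponentMk_eq_of_adj hab]

theorem reachable_treeRoot (hroot : ∀ c, G.connectedComponentMk (root c) = c) (v : V) :
    G.Reachable v (treeRoot root v) :=
  (ConnectedComponent.exact (hroot (G.connectedComponentMk v))).symm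

variable (hroot : ∀ c, G.connectedComponentMk (root c) = c)

noncomputable def pathToRoot (v : V) : G.Walk v (treeRoot root v) :=
  (reachable_treeRoot hroot v).exists_isPath.choose

theorem isPath_pathToRoot (v : V) : (pathToRoot hroot v).IsPath :=
  (reachable_treeRoot hroot v).exists_isPath.choose_spec

noncomputable def parent (v : V) : V := (pathToRoot hroot v).snd

theorem adj_parent {v : V} (hv : treeRoot root v ≠ v) : G.Adj v (parent hroot v) :=
  Walk.adj_snd (Walk.not_nil_of_ne hv.symm)

theorem isFixedPt_parent_iff {v : V} : IsFixedPt (parent hroot) v ↔ treeRoot root v = v := by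
  refine ⟨fun h => by_contra fun hv => (adj_parent hroot hv).ne h.symm, fun h => ?_⟩
  have snd_eq : ∀ {w} (p : G.Walk v w), p.IsPath → w = v → p.snd = v := by
    rintro w p hp rfl
    cases Walk.isPath_iff_nil.1 hp
    rfl
  exact snd_eq _ (isPath_pathToRoot hroot v) h

theorem isFixedPt_parent_root (c : G.ConnectedComponent) : IsFixedPt (parent hroot) (root c) :=
  (isFixedPt_parent_iff hroot).2 (by rw [treeRoot, hroot])

noncomputable def fixedPointsParentEquiv : fixedPoints (parent hroot) ≃ G.ConnectedComponent where
  toFun v := G.connectedComponentMk v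
  invFun c := ⟨root c, isFixedPt_parent_root hroot c⟩
  left_inv v := Subtype.ext ((isFixedPt_parent_iff hroot).1 v.2)
  right_inv c := hroot c

theorem functionalGraph_parent (hG : G.IsAcyclic) : functionalGraph (parent hroot) = G := by
  ext a b
  rw [functionalGraph_adj]
  refine ⟨?_, fun hab => ⟨hab.ne, ?_⟩⟩
  · rintro ⟨hne, rfl | rfl⟩
    · exact adj_parent hroot fun h => hne ((isFixedPt_parent_iff hroot).2 h).symm
    · exact (adj_parent hroot fun h => hne ((isFixedPt_parent_iff hroot).2 h)).symm
  · have hp := isPath_pathToRoot hroot b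
    rw [← Walk.isPath_copy _ rfl (treeRoot_eq_of_adj hab.symm)] at hp
    simpa [parent] using hG.snd_eq_or_snd_eq_of_adj (isPath_pathToRoot hroot a) hp hab

theorem length_pathToRoot_parent (hG : G.IsAcyclic) {v : V} (hv : treeRoot root v ≠ v) :
    (pathToRoot hroot (parent hroot v)).length + 1 = (pathToRoot hroot v).length := by
  set p := pathToRoot hroot v
  have hroot_eq : treeRoot root v = treeRoot root (parent hroot v) :=
    treeRoot_eq_of_adj (adj_parent hroot hv)
  have htail : (p.tail.copy rfl hroot_eq).IsPath := by
    rw [Walk.isPath_copy]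
    exact (isPath_pathToRoot hroot v).tail
  have huniq := (hG.subsingleton_path _ _).elim ⟨_, isPath_pathToRoot hroot (parent hroot v)⟩
    ⟨_, htail⟩
  rw [← Walk.length_tail_add_one (Walk.not_nil_of_ne hv.symm),
    ← Walk.length_copy p.tail rfl hroot_eq]
  exact congrArg (fun q : G.Path _ _ => q.1.length + 1) huniq

theorem reachesFixedPt_parent (hG : G.IsAcyclic) : ReachesFixedPt (parent hroot) :=
  ReachesFixedPt.of_apply_lt (fun v => (pathToRoot hroot v).length) fun v hv => by
    have := length_pathToRoot_parent hroot hG (mt (isFixedPt_parent_iff hroot).2 hv)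
    omega

end RootedForest

end SimpleGraph

namespace Function.ReachesFixedPt

open SimpleGraph

variable {V : Type*} {f g : V → V}

/-- Where `f` and `g` disagree at `v`, the edge `v — g v` is the edge `g v ↦ v` of `f`, which makes
`g v` a point of disagreement as well; so `g` could never reach a fixed point from `v`. -/
theorem eq_of_functionalGraph_eq (hg : ReachesFixedPt g)
    (hgraph : functionalGraph f = functionalGraph g) (hfix : fixedPoints f = fixedPoints g) :
    f = g := by
  have eq_of_isFixedPt : ∀ {v}, IsFixedPt g v → f v = g v := fun {v} hv =>
    (show v ∈ fixedPoints f from hfix ▸ hv).eq.trans hv.eq.symm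
  funext v
  refine hg.induction (P := fun v => f v = g v) (fun v hv => eq_of_isFixedPt hv)
    (fun v hv hgv => ?_) v
  by_contra hne
  have hback : f (g v) = v :=
    (functionalGraph_adj.1 (hgraph ▸ functionalGraph_adj_apply hv)).2.resolve_left hne
  exact hg.iterate_apply_ne hv 1 (hgv.symm.trans hback)

theorem isAcyclic_functionalGraph (hf : ReachesFixedPt f) : (functionalGraph f).IsAcyclic := by
  rw [isAcyclic_iff_forall_adj_isBridge]
  suffices h : ∀ a, ¬IsFixedPt f a → (functionalGraph f).IsBridge s(a, f a) by
    intro v w hadj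
    rcases functionalGraph_adj.1 hadj with ⟨hne, rfl | rfl⟩
    · exact h v hne.symm
    · exact Sym2.eq_swap ▸ h w hne
  rintro a ha ⟨p⟩
  -- Without the edge `a — f a`, one can only move to vertices from which `f` still leads to `a`.
  have closed : ∀ {w u}, ((functionalGraph f).deleteEdges {s(a, f a)}).Adj w u →
      (∃ k, f^[k] w = a) → ∃ k, f^[k] u = a := by
    rintro w u hadj ⟨k, hk⟩
    rw [deleteEdges_adj, Set.mem_singleton_iff] at hadj
    rcases (functionalGraph_adj.1 hadj.1).2 with rfl | rfl
    · cases k with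
      | zero => exact absurd (by rw [← hk]; rfl) hadj.2
      | succ k => exact ⟨k, by rwa [← iterate_succ_apply]⟩
    · exact ⟨k + 1, by rwa [iterate_succ_apply]⟩
  have walk : ∀ {w u} (q : ((functionalGraph f).deleteEdges {s(a, f a)}).Walk w u),
      (∃ k, f^[k] w = a) → ∃ k, f^[k] u = a := by
    intro w u q
    induction q with
    | nil => exact id
    | cons hadj _ ih => exact fun h => ih (closed hadj h)
  obtain ⟨k, hk⟩ := walk p ⟨0, rfl⟩
  exact hf.iterate_apply_ne ha k hk

variable (hf : ReachesFixedPt f)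

theorem reachable_root (v : V) : (functionalGraph f).Reachable v (hf.root v) := by
  refine hf.induction (P := fun v => (functionalGraph f).Reachable v (hf.root v))
    (fun v hv => ?_) (fun v hv h => ?_) v
  · rw [hf.root_eq_self_iff.2 hv]
  · exact (functionalGraph_adj_apply hv).reachable.trans (hf.root_apply v ▸ h)

theorem root_eq_of_reachable {a b : V} (h : (functionalGraph f).Reachable a b) :
    hf.root a = hf.root b := by
  obtain ⟨p⟩ := h
  induction p with
  | nil => rfl
  | cons hadj _ ih =>
    rw [← ih]
    rcases (functionalGraph_adj.1 hadj).2 with rfl | rfl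
    · exact (hf.root_apply _).symm
    · exact hf.root_apply _

noncomputable def componentEquivFixedPoints :
    (functionalGraph f).ConnectedComponent ≃ fixedPoints f where
  toFun := ConnectedComponent.lift (fun v => ⟨hf.root v, hf.isFixedPt_root v⟩)
    fun _ _ p _ => Subtype.ext (hf.root_eq_of_reachable ⟨p⟩)
  invFun p := (functionalGraph f).connectedComponentMk p
  left_inv := ConnectedComponent.ind fun v => ConnectedComponent.sound (hf.reachable_root v).symm
  right_inv p := Subtype.ext (hf.root_eq_self_iff.2 p.2)

end Function.ReachesFixedPt

open Function SimpleGraph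

variable {V : Type*}

def forestMaps (V : Type*) (r : ℕ) : Set (V → V) :=
  {f | ReachesFixedPt f ∧ (fixedPoints f).ncard = r}

abbrev RootedForests (V : Type*) (r : ℕ) :=
  {F : (G : SimpleGraph V) × (G.ConnectedComponent → V) //
    F.1.IsAcyclic ∧ Nat.card F.1.ConnectedComponent = r ∧ ∀ c, F.1.connectedComponentMk (F.2 c) = c}

namespace RootedForests

variable {r : ℕ}

noncomputable def ofForestMap (f : forestMaps V r) : RootedForests V r :=
  ⟨⟨functionalGraph f, fun c => f.2.1.componentEquivFixedPoints c⟩, f.2.1.isAcyclic_functionalGraph,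
    by rw [Nat.card_congr f.2.1.componentEquivFixedPoints, Nat.card_coe_set_eq, f.2.2],
    f.2.1.componentEquivFixedPoints.symm_apply_apply⟩

noncomputable def parentMap (F : RootedForests V r) : forestMaps V r :=
  ⟨parent F.2.2.2, reachesFixedPt_parent F.2.2.2 F.2.1, by
    rw [← Nat.card_coe_set_eq, Nat.card_congr (fixedPointsParentEquiv F.2.2.2), F.2.2.1]⟩

theorem parentMap_ofForestMap (f : forestMaps V r) : parentMap (ofForestMap f) = f := by
  obtain ⟨f, hf, -⟩ := f
  refine Subtype.ext (hf.eq_of_functionalGraph_eq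
    (functionalGraph_parent _ hf.isAcyclic_functionalGraph) ?_)
  ext v
  exact (isFixedPt_parent_iff _).trans hf.root_eq_self_iff

theorem parentMap_injective : Injective (parentMap (V := V) (r := r)) := by
  rintro ⟨⟨G, root⟩, hG, _, hroot⟩ ⟨⟨H, root'⟩, hH, _, hroot'⟩ h
  have hpar : parent hroot = parent hroot' := congrArg Subtype.val h
  obtain rfl : G = H :=
    (functionalGraph_parent hroot hG).symm.trans (hpar ▸ functionalGraph_parent hroot' hH)
  obtain rfl : root = root' := by
    funext c
    have hc : fixedPointsParentEquiv hroot ⟨root c, isFixedPt_parent_root hroot c⟩ =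
        fixedPointsParentEquiv hroot ⟨root' c, hpar ▸ isFixedPt_parent_root hroot' c⟩ :=
      (hroot c).trans (hroot' c).symm
    exact congrArg Subtype.val ((fixedPointsParentEquiv hroot).injective hc)
  rfl

noncomputable def equivForestMaps : RootedForests V r ≃ forestMaps V r where
  toFun := parentMap
  invFun := ofForestMap
  left_inv F := parentMap_injective (parentMap_ofForestMap (parentMap F))
  right_inv := parentMap_ofForestMap

end RootedForests

theorem Nat.card_sigma_of_card_eq {α : Type*} {β : α → Type*} [Finite α] [∀ a, Finite (β a)]
    {c : ℕ} (h : ∀ a, Nat.card (β a) = c) : Nat.card (Σ a, β a) = Nat.card α * c := by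
  have := Fintype.ofFinite α
  rw [Nat.card_sigma, Finset.sum_const_nat fun a _ => h a, Finset.card_univ,
    Nat.card_eq_fintype_card]

section Counting

variable [Finite V]

theorem Function.card_not_isFixedPt (f : V → V) :
    Nat.card {u // ¬IsFixedPt f u} = Nat.card V - (fixedPoints f).ncard :=
  (Nat.card_coe_set_eq (fixedPoints f)ᶜ).trans (Set.ncard_compl _)

theorem Function.ReachesFixedPt.card_root_ne {f : V → V} (hf : ReachesFixedPt f) :
    Nat.card {q : V × V // IsFixedPt f q.1 ∧ hf.root q.2 ≠ q.1} =
      (fixedPoints f).ncard * Nat.card V - Nat.card V := by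
  have hset : {q : V × V | IsFixedPt f q.1 ∧ hf.root q.2 ≠ q.1} =
      (fixedPoints f ×ˢ Set.univ) \ Set.range fun v => (hf.root v, v) := by
    ext ⟨ρ, v⟩
    simp [eq_comm]
  have hsub : (Set.range fun v => (hf.root v, v)) ⊆ fixedPoints f ×ˢ Set.univ := by
    rintro _ ⟨v, rfl⟩
    exact ⟨hf.isFixedPt_root v, trivial⟩
  have hinj : Injective fun v => (hf.root v, v) := fun v w h => congrArg Prod.snd h
  rw [← Set.coe_ofPred, Nat.card_coe_set_eq, hset, Set.ncard_sdiff hsub, Set.ncard_prod,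
    Set.ncard_univ, Set.ncard_range_of_injective hinj]

def cutAttachEquiv [DecidableEq V] (r : ℕ) :
    (Σ f : forestMaps V (r + 1), {q : V × V // IsFixedPt f q.1 ∧ f.2.1.root q.2 ≠ q.1}) ≃
      Σ g : forestMaps V r, {u : V // ¬IsFixedPt g u} where
  toFun := fun ⟨⟨f, hf, hcard⟩, ⟨(ρ, v), hρ, hv⟩⟩ =>
    have hvρ : v ≠ ρ := hf.iterate_ne_of_root_ne hρ hv 0
    ⟨⟨update f ρ v, hf.update_of_root_ne hρ hv, by
        rw [fixedPoints_update_of_ne hρ hvρ,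
          Set.ncard_sdiff_singleton_of_mem (show ρ ∈ fixedPoints f from hρ), hcard]
        rfl⟩,
      ⟨ρ, by simpa [IsFixedPt] using hvρ⟩⟩
  invFun := fun ⟨⟨g, hg, hcard⟩, ⟨u, hu⟩⟩ =>
    ⟨⟨update g u u, hg.update_self u, by
        rw [fixedPoints_update_self, Set.ncard_insert_of_notMem (show u ∉ fixedPoints g from hu),
          hcard]⟩,
      ⟨(u, g u), update_self _ _ _, hg.root_update_self_apply_ne hu _⟩⟩
  left_inv := fun ⟨⟨f, hf, hcard⟩, ⟨(ρ, v), hρ, hv⟩⟩ => by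
    refine Sigma.subtype_ext (Subtype.ext ?_) ?_
    · simp only [update_idem]
      exact update_eq_self_iff.2 hρ.eq.symm
    · simp
  right_inv := fun ⟨⟨g, hg, hcard⟩, ⟨u, hu⟩⟩ => by
    refine Sigma.subtype_ext (Subtype.ext ?_) rfl
    simp only [update_idem, update_eq_self]

theorem card_forestMaps_succ_mul (r : ℕ) :
    Nat.card (forestMaps V (r + 1)) * (r * Nat.card V) =
      Nat.card (forestMaps V r) * (Nat.card V - r) := by
  classical
  have := Nat.card_congr (cutAttachEquiv (V := V) r)
  rwa [Nat.card_sigma_of_card_eq fun f => ?_, Nat.card_sigma_of_card_eq fun g => ?_] at this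
  · rw [card_not_isFixedPt, g.2.2]
  · rw [f.2.1.card_root_ne, f.2.2, Nat.succ_mul, Nat.add_sub_cancel]

theorem card_forestMaps_card : Nat.card (forestMaps V (Nat.card V)) = 1 := by
  have : forestMaps V (Nat.card V) = {id} := by
    ext f
    refine ⟨fun ⟨_, hcard⟩ => ?_, ?_⟩
    · have := Set.eq_of_subset_of_ncard_le (Set.subset_univ _) (by rw [hcard, Set.ncard_univ])
      funext v
      exact (this ▸ Set.mem_univ v : v ∈ fixedPoints f)
    · rintro rfl
      exact ⟨fun v => ⟨0, rfl⟩, by rw [fixedPoints_id, Set.ncard_univ]⟩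
  rw [this, Nat.card_unique]

theorem eq_choose_mul_pow_of_recurrence {n : ℕ} (A : ℕ → ℕ) (htop : A n = 1)
    (hrec : ∀ r, 1 ≤ r → r < n → A (r + 1) * (r * n) = A r * (n - r)) {r : ℕ} (hr : 1 ≤ r)
    (hrn : r ≤ n) : A r = (n - 1).choose (r - 1) * n ^ (n - r) := by
  revert hr
  induction hrn using Nat.decreasingInduction with
  | self => simp [htop]
  | of_succ r hrn ih =>
    intro hr
    have hchoose : (n - 1).choose r * r = (n - 1).choose (r - 1) * (n - r) := by
      have := Nat.choose_succ_right_eq (n - 1) (r - 1)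
      rwa [Nat.sub_add_cancel hr, show n - 1 - (r - 1) = n - r by omega] at this
    have hpow : n ^ (n - (r + 1)) * n = n ^ (n - r) := by
      rw [← pow_succ, show n - (r + 1) + 1 = n - r by omega]
    refine Nat.eq_of_mul_eq_mul_right (show 0 < n - r by omega) ?_
    calc A r * (n - r) = A (r + 1) * (r * n) := (hrec r hr hrn).symm
      _ = (n - 1).choose r * r * (n ^ (n - (r + 1)) * n) := by
        rw [ih (by omega), Nat.add_sub_cancel]
        ring
      _ = (n - 1).choose (r - 1) * n ^ (n - r) * (n - r) := by
        rw [hchoose, hpow]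
        ring

theorem card_forestMaps {r : ℕ} (hr : 1 ≤ r) (hrV : r ≤ Nat.card V) :
    Nat.card (forestMaps V r) = (Nat.card V - 1).choose (r - 1) * Nat.card V ^ (Nat.card V - r) :=
  eq_choose_mul_pow_of_recurrence (fun r => Nat.card (forestMaps V r)) card_forestMaps_card
    (fun r _ _ => card_forestMaps_succ_mul r) hr hrV

end Counting

theorem rooted_forest_count_general (n r : ℕ) (hr : 1 ≤ r) (hrn : r ≤ n) :
    Nat.card {F : (G : SimpleGraph (Fin n)) × (G.ConnectedComponent → Fin n) //
        F.1.IsAcyclic ∧ Nat.card F.1.ConnectedComponent = r ∧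
        ∀ c, F.1.connectedComponentMk (F.2 c) = c} =
      (n - 1).choose (r - 1) * n ^ (n - r) := by
  have hcard : Nat.card (Fin n) = n := Nat.card_fin n
  rw [Nat.card_congr (RootedForests.equivForestMaps (V := Fin n) (r := r)),
    card_forestMaps hr (by rwa [hcard]), hcard]

/-- The number of rooted spanning forests of the complete graph on `n` labeled
vertices with exactly `r` trees (each with a distinguished root) equals
`binomial(n-1, r-1) * n^(n-r)`. A rooted spanning forest is encoded as an
acyclic simple graph on `Fin n` (a spanning subgraph of the complete graph)
together with a choice of a root vertex in each connected component. -/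
theorem rooted_forest_count (n r : ℕ) (hn : 1 ≤ n) (hr : 1 ≤ r) (hrn : r ≤ n) :
    Nat.card {F : (G : SimpleGraph (Fin n)) × (G.ConnectedComponent → Fin n) //
        F.1.IsAcyclic ∧ Nat.card F.1.ConnectedComponent = r ∧
        ∀ c, F.1.connectedComponentMk (F.2 c) = c} =
      (n - 1).choose (r - 1) * n ^ (n - r) :=
  rooted_forest_count_general n r hr hrn
end

section
/- The number of unrooted labeled trees on n vertices is n^(n-2) (Cayley's formula). -/
/-!
Joyal's proof. A tree on `V` with a root `a` is the same thing as a parent map `p : V → V`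
fixing `a` along which every vertex eventually reaches `a`. Marking a second vertex `b` singles
out the spine `b, p b, …, a`; Joyal's map sends the `i`-th smallest spine vertex to the `i`-th
vertex along the spine and every other vertex to its parent. The spine is then exactly the set of
periodic points of the resulting self-map of `V`, which recovers `a`, `b` and `p`, and every
self-map arises this way (sort its periodic points and read off their images as a spine). Hence
`n² · #trees = nⁿ`.
-/

open Function Set

namespace Function
variable {α : Type*} {f g : α → α} {s : Set α}

theorem exists_iterate_mem_periodicPts [Finite α] (f : α → α) (x : α) :
    ∃ k, f^[k] x ∈ periodicPts f := by
  obtain ⟨m, n, hlt, heq⟩ :=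
    Set.finite_univ.exists_lt_map_eq_of_forall_mem (f := (f^[·] x)) fun _ => mem_univ _
  refine ⟨m, mk_mem_periodicPts (Nat.sub_pos_of_lt hlt) ?_⟩
  rw [IsPeriodicPt, IsFixedPt, ← iterate_add_apply, Nat.sub_add_cancel hlt.le, heq]

theorem periodicPts_subset_of_mapsTo (hs : MapsTo f s s) (h : ∀ x, ∃ k, f^[k] x ∈ s) :
    periodicPts f ⊆ s := by
  rintro x ⟨n, hn, hx⟩
  obtain ⟨k, hk⟩ := h x
  have hle : k ≤ n * k := Nat.le_mul_of_pos_left k hn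
  rw [← (hx.mul_const k).eq, ← Nat.sub_add_cancel hle, iterate_add_apply]
  exact hs.iterate _ hk

theorem subset_periodicPts_of_injOn (hfin : s.Finite) (hs : MapsTo f s s) (hinj : InjOn f s) :
    s ⊆ periodicPts f := by
  have : Finite s := hfin
  have hsc : Semiconj Subtype.val (hs.restrict f s s) f := fun _ => rfl
  exact fun x hx => hsc.mapsTo_periodicPts ((hs.restrict_inj.mpr hinj).mem_periodicPts ⟨x, hx⟩)

theorem exists_iterate_mem_of_eqOn_compl (hfg : EqOn f g sᶜ) {x : α} {k : ℕ}
    (hk : g^[k] x ∈ s) : ∃ j, f^[j] x ∈ s := by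
  induction k generalizing x with
  | zero => exact ⟨0, hk⟩
  | succ k ih =>
    by_cases hx : x ∈ s
    · exact ⟨0, hx⟩
    · rw [iterate_succ_apply, ← hfg hx] at hk
      obtain ⟨j, hj⟩ := ih hk
      exact ⟨j + 1, hj⟩

end Function

namespace List
variable {α : Type*} [DecidableEq α] {l : List α}

def nextOrSelf (l : List α) (x : α) : α := l.getD (l.idxOf x + 1) x

theorem Nodup.nextOrSelf_getElem (hl : l.Nodup) {i : ℕ} (hi : i + 1 < l.length) :
    l.nextOrSelf l[i] = l[i + 1] := by
  rw [nextOrSelf, hl.idxOf_getElem, getD_eq_getElem]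

theorem Nodup.nextOrSelf_getLast (hl : l.Nodup) (hne : l ≠ []) :
    l.nextOrSelf (l.getLast hne) = l.getLast hne := by
  rw [nextOrSelf, getLast_eq_getElem, hl.idxOf_getElem, getD_eq_default]
  omega

end List

structure IsParentMap {α : Type*} (p : α → α) (a : α) : Prop where
  apply_root : p a = a
  exists_iterate_eq_root : ∀ x, ∃ k, p^[k] x = a

namespace IsParentMap
variable {α : Type*} {p : α → α} {a : α}

noncomputable def depth (p : α → α) (a x : α) : ℕ := sInf {k | p^[k] x = a}

theorem iterate_depth (hp : IsParentMap p a) (x : α) : p^[depth p a x] x = a :=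
  Nat.sInf_mem (hp.exists_iterate_eq_root x)

theorem depth_le {x : α} {k : ℕ} (hk : p^[k] x = a) : depth p a x ≤ k :=
  Nat.sInf_le hk

theorem depth_root : depth p a a = 0 :=
  Nat.le_zero.mp (depth_le (iterate_zero_apply p a))

theorem depth_apply (hp : IsParentMap p a) {x : α} (hx : x ≠ a) :
    depth p a (p x) + 1 = depth p a x := by
  have hpos : depth p a x ≠ 0 := fun h => hx (by simpa [h] using hp.iterate_depth x)
  have hle : depth p a (p x) ≤ depth p a x - 1 := by
    apply depth_le
    rw [← iterate_succ_apply, Nat.succ_eq_add_one, Nat.sub_add_cancel (Nat.pos_of_ne_zero hpos)]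
    exact hp.iterate_depth x
  have hge : depth p a x ≤ depth p a (p x) + 1 := depth_le (hp.iterate_depth (p x))
  omega

end IsParentMap

namespace SimpleGraph
variable {V : Type*} {G : SimpleGraph V}

theorem isAcyclic_of_subsingleton_lower_neighbors (h : V → ℕ)
    (H : ∀ ⦃x y z⦄, G.Adj x y → G.Adj x z → h y ≤ h x → h z ≤ h x → y = z) : G.IsAcyclic := by
  classical
  intro v c hc
  obtain ⟨u, hu, hmax⟩ := c.support.toFinset.exists_max_image h ⟨v, by simp⟩
  rw [List.mem_toFinset] at hu
  set c' := c.rotate u hu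
  have hc' : c'.IsCycle := hc.rotate hu
  have hle : ∀ w ∈ c'.support, h w ≤ h u := fun w hw =>
    hmax w (List.mem_toFinset.mpr ((c.mem_support_rotate_iff u hu).mp hw))
  exact hc'.snd_ne_penultimate <| H (c'.adj_snd hc'.not_nil) (c'.adj_penultimate hc'.not_nil).symm
    (hle _ (c'.getVert_mem_support 1)) (hle _ (c'.getVert_mem_support _))

def fromFun (p : V → V) : SimpleGraph V := fromRel fun x y => p x = y

theorem fromFun_adj {p : V → V} {x y : V} :
    (fromFun p).Adj x y ↔ x ≠ y ∧ (p x = y ∨ p y = x) := fromRel_adj ..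

namespace IsTree

noncomputable def pathTo (hG : G.IsTree) (x a : V) : G.Walk x a :=
  (hG.existsUnique_path x a).exists.choose

theorem isPath_pathTo (hG : G.IsTree) (x a : V) : (hG.pathTo x a).IsPath :=
  (hG.existsUnique_path x a).exists.choose_spec

theorem pathTo_eq (hG : G.IsTree) {x a : V} {w : G.Walk x a} (hw : w.IsPath) :
    hG.pathTo x a = w :=
  (hG.existsUnique_path x a).unique (hG.isPath_pathTo x a) hw

noncomputable def parent (hG : G.IsTree) (a x : V) : V := (hG.pathTo x a).snd

theorem pathTo_self (hG : G.IsTree) (a : V) : hG.pathTo a a = .nil :=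
  hG.pathTo_eq .nil

theorem parent_root (hG : G.IsTree) (a : V) : hG.parent a a = a := by
  rw [parent, pathTo_self]
  rfl

theorem pathTo_eq_cons (hG : G.IsTree) {a x : V} (hx : x ≠ a) :
    ∃ h : G.Adj x (hG.parent a x), hG.pathTo x a = .cons h (hG.pathTo (hG.parent a x) a) := by
  have hnil : ¬(hG.pathTo x a).Nil := fun h => hx h.eq
  have htail : hG.pathTo (hG.parent a x) a = (hG.pathTo x a).tail :=
    hG.pathTo_eq (hG.isPath_pathTo x a).tail
  refine ⟨(hG.pathTo x a).adj_snd hnil, ?_⟩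
  rw [htail]
  exact ((hG.pathTo x a).cons_tail_eq hnil).symm

theorem fromFun_parent (hG : G.IsTree) (a : V) : fromFun (hG.parent a) = G := by
  have hadj : ∀ x, hG.parent a x ≠ x → G.Adj x (hG.parent a x) := fun x hx =>
    (hG.pathTo_eq_cons fun hxa => hx (by subst hxa; exact hG.parent_root x)).1
  ext x y
  rw [fromFun_adj]
  constructor
  · rintro ⟨hxy, rfl | rfl⟩
    · exact hadj x hxy.symm
    · exact (hadj y hxy).symm
  · intro hxy
    refine ⟨hxy.ne, ?_⟩
    by_cases hy : y ∈ (hG.pathTo x a).support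
    · exact .inl (hG.isAcyclic.eq_snd_of_adj_start (hG.isPath_pathTo x a) hxy hy).symm
    · right
      rw [parent, hG.pathTo_eq ((hG.isPath_pathTo x a).cons hy (h := hxy.symm)), Walk.snd_cons]

theorem isParentMap_parent (hG : G.IsTree) (a : V) : IsParentMap (hG.parent a) a := by
  refine ⟨hG.parent_root a, fun x => ?_⟩
  induction hn : (hG.pathTo x a).length generalizing x with
  | zero => exact ⟨0, Walk.eq_of_length_eq_zero hn⟩
  | succ n ih =>
    by_cases hx : x = a
    · exact ⟨0, hx⟩
    obtain ⟨h, hcons⟩ := hG.pathTo_eq_cons hx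
    rw [hcons, Walk.length_cons] at hn
    obtain ⟨k, hk⟩ := ih (hG.parent a x) (by omega)
    exact ⟨k + 1, hk⟩

end IsTree
end SimpleGraph

namespace IsParentMap
open SimpleGraph
variable {V : Type*} {p : V → V} {a : V}

theorem eq_apply_of_adj_of_depth_le (hp : IsParentMap p a) {x y : V}
    (hxy : (fromFun p).Adj x y) (hdepth : depth p a y ≤ depth p a x) : y = p x := by
  obtain ⟨hne, hxy | hyx⟩ := fromFun_adj.mp hxy
  · exact hxy.symm
  · have hy : y ≠ a := by
      rintro rfl
      exact hne (hyx.symm.trans hp.apply_root)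
    have := hp.depth_apply hy
    rw [hyx] at this
    omega

theorem isAcyclic_fromFun (hp : IsParentMap p a) : (fromFun p).IsAcyclic :=
  isAcyclic_of_subsingleton_lower_neighbors (depth p a) fun _ _ _ hxy hxz hy hz =>
    (hp.eq_apply_of_adj_of_depth_le hxy hy).trans (hp.eq_apply_of_adj_of_depth_le hxz hz).symm

theorem exists_isPath_fromFun (hp : IsParentMap p a) (x : V) :
    ∃ w : (fromFun p).Walk x a,
      w.IsPath ∧ w.snd = p x ∧ ∀ v ∈ w.support, depth p a v ≤ depth p a x := by
  induction hn : depth p a x generalizing x with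
  | zero =>
    obtain rfl : x = a := by simpa [hn] using hp.iterate_depth x
    exact ⟨.nil, .nil, hp.apply_root.symm, by simp [hn]⟩
  | succ n ih =>
    have hx : x ≠ a := by
      rintro rfl
      rw [depth_root] at hn
      omega
    have hdepth := hp.depth_apply hx
    obtain ⟨w, hw, -, hsupp⟩ := ih (p x) (by omega)
    have hadj : (fromFun p).Adj x (p x) :=
      fromFun_adj.mpr ⟨fun h => by rw [← h] at hdepth; omega, .inl rfl⟩
    refine ⟨.cons hadj w, hw.cons fun h => ?_, Walk.snd_cons .., ?_⟩
    · have := hsupp x h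
      omega
    · intro v hv
      rw [Walk.support_cons, List.mem_cons] at hv
      rcases hv with rfl | hv
      · exact hn.le
      · have := hsupp v hv
        omega

theorem isTree_fromFun (hp : IsParentMap p a) : (fromFun p).IsTree := by
  refine ⟨(connected_iff_exists_forall_reachable _).mpr ⟨a, fun x => ?_⟩, hp.isAcyclic_fromFun⟩
  obtain ⟨w, -⟩ := hp.exists_isPath_fromFun x
  exact w.reachable.symm

theorem parent_isTree_fromFun (hp : IsParentMap p a) : hp.isTree_fromFun.parent a = p := by
  funext x
  obtain ⟨w, hw, hsnd, -⟩ := hp.exists_isPath_fromFun x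
  rw [IsTree.parent, IsTree.pathTo_eq _ hw, hsnd]

end IsParentMap

noncomputable def SimpleGraph.treeEquivParentMap {V : Type*} (a : V) :
    {G : SimpleGraph V // G.IsTree} ≃ {p : V → V // IsParentMap p a} where
  toFun G := ⟨G.2.parent a, G.2.isParentMap_parent a⟩
  invFun p := ⟨SimpleGraph.fromFun p, p.2.isTree_fromFun⟩
  left_inv G := Subtype.ext (G.2.fromFun_parent a)
  right_inv p := Subtype.ext p.2.parent_isTree_fromFun

namespace IsParentMap
variable {α : Type*} {p : α → α} {a b : α}

noncomputable def spine (p : α → α) (a b : α) : List α := List.iterate p b (depth p a b + 1)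

@[simp]
theorem length_spine : (spine p a b).length = depth p a b + 1 := List.length_iterate ..

@[simp]
theorem getElem_spine {i : ℕ} (hi : i < (spine p a b).length) : (spine p a b)[i] = p^[i] b :=
  List.getElem_iterate ..

theorem spine_ne_nil : spine p a b ≠ [] := List.ne_nil_of_length_pos (by simp)

theorem getLast_spine (hp : IsParentMap p a) : (spine p a b).getLast spine_ne_nil = a := by
  simp [List.getLast_eq_getElem, hp.iterate_depth]

theorem root_mem_spine (hp : IsParentMap p a) : a ∈ spine p a b :=
  List.mem_iterate.mpr ⟨depth p a b, by omega, (hp.iterate_depth b).symm⟩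

theorem nodup_spine (hp : IsParentMap p a) : (spine p a b).Nodup := by
  refine List.pairwise_iff_getElem.mpr fun i j hi hj hij heq => ?_
  simp only [getElem_spine, length_spine] at heq hj
  have : p^[depth p a b - j + i] b = a := by
    rw [iterate_add_apply, heq, ← iterate_add_apply, Nat.sub_add_cancel (by omega),
      hp.iterate_depth]
  have := depth_le this
  omega

theorem spine_eq (hp : IsParentMap p a) {l : List α} (hl : l.Nodup) (hne : l ≠ [])
    (hiter : ∀ (i) (hi : i < l.length), l[i] = p^[i] b) (hlast : l.getLast hne = a) :
    spine p a b = l := by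
  have hlen : 0 < l.length := List.length_pos_iff.mpr hne
  have hle : depth p a b ≤ l.length - 1 :=
    depth_le (by rw [← hiter _ (by omega), ← List.getLast_eq_getElem hne, hlast])
  have hd : l[depth p a b] = l[l.length - 1] := by
    rw [hiter, hp.iterate_depth, ← List.getLast_eq_getElem hne, hlast]
  have hdepth := (hl.getElem_inj_iff).mp hd
  exact List.ext_getElem (by simp; omega) fun i _ _ => by rw [getElem_spine, hiter]

theorem apply_eq_nextOrSelf [DecidableEq α] (hp : IsParentMap p a) {x : α} (hx : x ∈ spine p a b) :
    p x = (spine p a b).nextOrSelf x := by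
  obtain ⟨i, hi, rfl⟩ := List.getElem_of_mem hx
  by_cases hlast : i + 1 < (spine p a b).length
  · rw [(hp.nodup_spine).nextOrSelf_getElem hlast]
    simp [iterate_succ_apply']
  · have : (spine p a b)[i] = (spine p a b).getLast spine_ne_nil := by
      rw [List.getLast_eq_getElem]; congr; omega
    rw [this, (hp.nodup_spine).nextOrSelf_getLast, getLast_spine hp, hp.apply_root]

theorem head?_spine : (spine p a b).head? = some b := by
  simp [spine, List.iterate]

theorem getLast?_spine (hp : IsParentMap p a) : (spine p a b).getLast? = some a := by
  rw [List.getLast?_eq_some_getLast spine_ne_nil, hp.getLast_spine]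

theorem exists_spine_eq [DecidableEq α] {l : List α} (hl : l.Nodup) (hne : l ≠ []) (f : α → α)
    (hf : ∀ x, ∃ k, f^[k] x ∈ l) :
    ∃ p, IsParentMap p (l.getLast hne) ∧ spine p (l.getLast hne) (l.head hne) = l ∧
      EqOn p f {x | x ∉ l} := by
  set p := fun x => if x ∈ l then l.nextOrSelf x else f x
  have hiter : ∀ (i) (hi : i < l.length), l[i] = p^[i] (l.head hne) := by
    intro i hi
    induction i with
    | zero => simp [List.head_eq_getElem]
    | succ i ih =>
      rw [iterate_succ_apply', ← ih (by omega), ← hl.nextOrSelf_getElem hi]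
      exact (if_pos (List.getElem_mem _)).symm
  have hp : IsParentMap p (l.getLast hne) := by
    refine ⟨(if_pos (List.getLast_mem hne)).trans (hl.nextOrSelf_getLast hne), fun x => ?_⟩
    obtain ⟨k, hk⟩ := hf x
    obtain ⟨j, hj⟩ := exists_iterate_mem_of_eqOn_compl (f := p) (s := {x | x ∈ l})
      (fun y (hy : y ∉ l) => if_neg hy) hk
    obtain ⟨i, hi, hji⟩ := List.getElem_of_mem hj
    refine ⟨l.length - 1 - i + j, ?_⟩
    rw [iterate_add_apply, ← hji, hiter, ← iterate_add_apply, Nat.sub_add_cancel (by omega),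
      ← hiter _ (by omega), List.getLast_eq_getElem]
  exact ⟨p, hp, hp.spine_eq hl hne hiter rfl, fun x hx => if_neg hx⟩

section Joyal
variable [LinearOrder α]

/-- On the spine, the `i`-th smallest vertex goes to the `i`-th vertex along the spine. -/
noncomputable def joyal (p : α → α) (a b : α) (x : α) : α :=
  if x ∈ spine p a b then (spine p a b).getD ((spine p a b).toFinset.sort.idxOf x) x else p x

theorem joyal_of_notMem {x : α} (hx : x ∉ spine p a b) : joyal p a b x = p x := if_neg hx

theorem map_joyal_sort (hp : IsParentMap p a) :
    (spine p a b).toFinset.sort.map (joyal p a b) = spine p a b := by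
  have hlen : (spine p a b).toFinset.sort.length = (spine p a b).length := by
    rw [Finset.length_sort, List.toFinset_card_of_nodup hp.nodup_spine]
  refine List.ext_getElem (by rw [List.length_map, hlen]) fun i hi _ => ?_
  have hmem : (spine p a b).toFinset.sort[i] ∈ spine p a b := by
    rw [← List.mem_toFinset, ← Finset.mem_sort (· ≤ ·)]
    exact List.getElem_mem _
  rw [List.getElem_map, joyal, if_pos hmem, (Finset.sort_nodup _ (· ≤ ·)).idxOf_getElem,
    List.getD_eq_getElem]

theorem periodicPts_joyal (hp : IsParentMap p a) :
    periodicPts (joyal p a b) = {x | x ∈ spine p a b} := by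
  have hsort : ∀ {x}, x ∈ (spine p a b).toFinset.sort ↔ x ∈ spine p a b := by
    simp only [Finset.mem_sort, List.mem_toFinset, implies_true]
  have hmaps : MapsTo (joyal p a b) {x | x ∈ spine p a b} {x | x ∈ spine p a b} := fun x hx => by
    rw [Set.mem_ofPred_eq, ← hp.map_joyal_sort]
    exact List.mem_map_of_mem (hsort.mpr hx)
  refine Subset.antisymm (periodicPts_subset_of_mapsTo hmaps fun x => ?_)
    (subset_periodicPts_of_injOn (List.finite_toSet _) hmaps fun x hx y hy => ?_)
  · refine exists_iterate_mem_of_eqOn_compl (g := p) (k := depth p a x)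
      (fun y hy => joyal_of_notMem hy) ?_
    rw [hp.iterate_depth]
    exact hp.root_mem_spine
  · have hnodup := hp.nodup_spine (b := b)
    rw [← hp.map_joyal_sort] at hnodup
    exact List.inj_on_of_nodup_map hnodup (hsort.mpr hx) (hsort.mpr hy)

theorem eq_of_joyal_eq {q : α → α} {c d : α} (hp : IsParentMap p a) (hq : IsParentMap q c)
    (h : joyal p a b = joyal q c d) : p = q ∧ a = c ∧ b = d := by
  have hspine : spine p a b = spine q c d := by
    have hfin : (spine p a b).toFinset = (spine q c d).toFinset := by
      ext x
      simp only [List.mem_toFinset]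
      exact Set.ext_iff.mp (hp.periodicPts_joyal.symm.trans (h ▸ hq.periodicPts_joyal)) x
    rw [← hp.map_joyal_sort, ← hq.map_joyal_sort, hfin, h]
  refine ⟨funext fun x => ?_, ?_, ?_⟩
  · by_cases hx : x ∈ spine p a b
    · rw [hp.apply_eq_nextOrSelf hx, hq.apply_eq_nextOrSelf (hspine ▸ hx), hspine]
    · rw [← joyal_of_notMem hx, h, joyal_of_notMem (hspine ▸ hx)]
  · simpa [hp.getLast?_spine, hq.getLast?_spine] using congrArg List.getLast? hspine
  · simpa [head?_spine] using congrArg List.head? hspine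

theorem exists_joyal_eq [Finite α] [Nonempty α] (f : α → α) :
    ∃ p a b, IsParentMap p a ∧ joyal p a b = f := by
  set s := (toFinite (periodicPts f)).toFinset.sort
  have hmem_s : ∀ {x}, x ∈ s ↔ x ∈ periodicPts f := by simp [s]
  set l := s.map f
  have hmem_l : ∀ {x}, x ∈ l ↔ x ∈ periodicPts f := by
    simp only [l, List.mem_map, hmem_s]
    exact fun {x} => ⟨fun ⟨y, hy, hyx⟩ => hyx ▸ (bijOn_periodicPts f).mapsTo hy,
      fun hx => (bijOn_periodicPts f).surjOn hx⟩
  have hl : l.Nodup := (Finset.sort_nodup _ _).map_on fun x hx y hy =>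
    (bijOn_periodicPts f).injOn (hmem_s.mp hx) (hmem_s.mp hy)
  have hne : l ≠ [] := by
    obtain ⟨k, hk⟩ := exists_iterate_mem_periodicPts f (Classical.arbitrary α)
    exact List.ne_nil_of_mem (hmem_l.mpr hk)
  obtain ⟨p, hp, hspine, hpf⟩ := exists_spine_eq hl hne f fun x =>
    (exists_iterate_mem_periodicPts f x).imp fun _ => hmem_l.mpr
  refine ⟨p, l.getLast hne, l.head hne, hp, funext fun x => ?_⟩
  by_cases hx : x ∈ l
  · have hsort : (spine p (l.getLast hne) (l.head hne)).toFinset.sort = s := by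
      congr 1
      ext y
      simp [hspine, hmem_l]
    have hmap := hp.map_joyal_sort (b := l.head hne)
    rw [hsort, hspine] at hmap
    exact List.map_inj_left.mp hmap x (hmem_s.mpr (hmem_l.mp hx))
  · rw [joyal_of_notMem (by rwa [hspine]), hpf hx]

end Joyal

end IsParentMap

theorem SimpleGraph.bijective_joyal_parent {V : Type*} [LinearOrder V] [Finite V] [Nonempty V] :
    Bijective fun t : V × V × {G : SimpleGraph V // G.IsTree} =>
      IsParentMap.joyal (t.2.2.2.parent t.1) t.1 t.2.1 := by
  constructor
  · rintro ⟨a, b, G⟩ ⟨a', b', G'⟩ h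
    obtain ⟨hparent, rfl, rfl⟩ :=
      IsParentMap.eq_of_joyal_eq (G.2.isParentMap_parent a) (G'.2.isParentMap_parent a') h
    obtain rfl : G = G' := (treeEquivParentMap a).injective (Subtype.ext hparent)
    rfl
  · intro f
    obtain ⟨p, a, b, hp, rfl⟩ := IsParentMap.exists_joyal_eq f
    have hparent : ((treeEquivParentMap a).symm ⟨p, hp⟩).2.parent a = p :=
      congrArg Subtype.val ((treeEquivParentMap a).apply_symm_apply ⟨p, hp⟩)
    exact ⟨(a, b, (treeEquivParentMap a).symm ⟨p, hp⟩), by simp only [hparent]⟩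

/-- Cayley's formula: the number of labeled trees on `n ≥ 1` vertices is `n^(n-2)`
(with natural subtraction, so for `n = 1` the right-hand side is `1^0 = 1`). -/
theorem cayley_formula (n : ℕ) (hn : 1 ≤ n) :
    Nat.card {G : SimpleGraph (Fin n) // G.IsTree} = n ^ (n - 2) := by
  have : Nonempty (Fin n) := ⟨⟨0, hn⟩⟩
  set t := Nat.card {G : SimpleGraph (Fin n) // G.IsTree}
  have hcard : n * (n * t) = n ^ n := by
    simpa [Nat.card_prod] using
      Nat.card_eq_of_bijective _ (SimpleGraph.bijective_joyal_parent (V := Fin n))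
  obtain rfl | hn := hn.eq_or_lt
  · simpa using hcard
  · obtain ⟨m, rfl⟩ := Nat.exists_eq_add_of_le' hn
    refine Nat.eq_of_mul_eq_mul_left (show 0 < (m + 2) ^ 2 by positivity) ?_
    calc (m + 2) ^ 2 * t = (m + 2) * ((m + 2) * t) := by ring
      _ = (m + 2) ^ (m + 2) := hcard
      _ = (m + 2) ^ 2 * (m + 2) ^ (m + 2 - 2) := by rw [Nat.add_sub_cancel, ← pow_add, add_comm]
end

section
/- Let E be a finite hypergraph G = (V, E), i.e. E a set of subsets of V each of cardinality at least 2. Then sum over A in E of (|A| - 1), minus |V|, plus c(G) is nonnegative, where c(G) is the number of connected components of G; equality holds if and only if G is a hyperforest (contains no hypercycle). -/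
open Finset Relation

/-!
Induction on the hyperedges. Adding a hyperedge `A` to `E` raises `∑ (|A| - 1)` by `|A| - 1`
and fuses the `t` components of `E` that `A` meets into one, so the quantity grows by
`|A| - t ≥ 0`, with equality iff `A` meets every component of `E` at most once. That happens iff
`A` closes no cycle: a cycle through `A` joins two vertices of `A` inside `E`, and conversely a
shortest walk in `E` between two vertices of `A` has distinct vertices and distinct hyperedges,
so `A` closes it into a cycle.
-/

/-- Two vertices are adjacent in a hypergraph if some hyperedge contains both. -/
def HGAdj {V : Type} (E : Finset (Finset V)) (a b : V) : Prop :=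
  ∃ A ∈ E, a ∈ A ∧ b ∈ A

/-- A hypergraph (on a fixed vertex type) is connected if every pair of vertices
is joined by a walk, i.e. by a chain of adjacencies. -/
def HGConnected {V : Type} (E : Finset (Finset V)) : Prop :=
  ∀ a b : V, Relation.ReflTransGen (HGAdj E) a b

/-- A hypergraph contains a (hyper)cycle: a closed walk
`(v 0, e 0, v 1, e 1, …, e (k-1), v k)` of length `k ≥ 2` with distinct
vertices `v 0, …, v (k-1)`, `v k = v 0`, and distinct hyperedges. -/
def HasHGCycle {V : Type} (E : Finset (Finset V)) : Prop :=
  ∃ (k : ℕ) (v : ℕ → V) (e : ℕ → Finset V),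
    2 ≤ k ∧ (∀ i < k, e i ∈ E) ∧ (∀ i < k, v i ∈ e i ∧ v (i + 1) ∈ e i) ∧
    v k = v 0 ∧ (∀ i < k, ∀ j < k, v i = v j → i = j) ∧
    (∀ i < k, ∀ j < k, e i = e j → i = j)

theorem Set.injOn_of_lt_imp_ne {α β : Type*} [LinearOrder α] {f : α → β} {s : Set α}
    (h : ∀ i ∈ s, ∀ j ∈ s, i < j → f i ≠ f j) : s.InjOn f := fun i hi j hj hij =>
  by_contra fun hne => (Ne.lt_or_gt hne).elim (fun hlt => h i hi j hj hlt hij)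
    fun hlt => h j hj i hi hlt hij.symm

section
variable {V : Type} {E : Finset (Finset V)}

instance HGAdj.instSymm : Std.Symm (HGAdj E) :=
  ⟨fun _ _ ⟨A, hA, ha, hb⟩ => ⟨A, hA, hb, ha⟩⟩

theorem HGAdj.mono {F : Finset (Finset V)} (hEF : E ⊆ F) : HGAdj E ≤ HGAdj F :=
  fun _ _ ⟨A, hA, ha, hb⟩ => ⟨A, hEF hA, ha, hb⟩

theorem card_quot_hgAdj_empty : Nat.card (Quot (HGAdj (∅ : Finset (Finset V)))) = Nat.card V :=
  Nat.card_congr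
    { toFun := Quot.lift id fun _ _ ⟨_, h, _⟩ => absurd h (notMem_empty _)
      invFun := Quot.mk _
      left_inv := Quot.ind fun _ => rfl
      right_inv := fun _ => rfl }

theorem quot_mk_hgAdj_eq_iff {a b : V} :
    Quot.mk (HGAdj E) a = Quot.mk (HGAdj E) b ↔ ReflTransGen (HGAdj E) a b := by
  rw [Quot.eq, EqvGen.eqvGen_eq_reflTransGen]

def IsHGWalk (E : Finset (Finset V)) (v : ℕ → V) (e : ℕ → Finset V) (m : ℕ) : Prop :=
  ∀ i < m, e i ∈ E ∧ v i ∈ e i ∧ v (i + 1) ∈ e i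

theorem hasHGCycle_iff_exists_isHGWalk :
    HasHGCycle E ↔ ∃ (k : ℕ) (v : ℕ → V) (e : ℕ → Finset V), 2 ≤ k ∧ IsHGWalk E v e k ∧
      v k = v 0 ∧ (Set.Iio k).InjOn v ∧ (Set.Iio k).InjOn e := by
  constructor
  · rintro ⟨k, v, e, hk, he, hstep, hclose, hv, he'⟩
    exact ⟨k, v, e, hk, fun i hi => ⟨he i hi, hstep i hi⟩, hclose,
      fun i hi j hj => hv i hi j hj, fun i hi j hj => he' i hi j hj⟩
  · rintro ⟨k, v, e, hk, hw, hclose, hv, he⟩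
    exact ⟨k, v, e, hk, fun i hi => (hw i hi).1, fun i hi => (hw i hi).2, hclose,
      fun i hi j hj => @hv i hi j hj, fun i hi j hj => @he i hi j hj⟩

theorem IsHGWalk.mono {F : Finset (Finset V)} {v : ℕ → V} {e : ℕ → Finset V} {m : ℕ}
    (hw : IsHGWalk E v e m) (hEF : E ⊆ F) : IsHGWalk F v e m :=
  fun i hi => ⟨hEF (hw i hi).1, (hw i hi).2⟩

theorem IsHGWalk.take {v : ℕ → V} {e : ℕ → Finset V} {m k : ℕ} (hw : IsHGWalk E v e m)
    (hk : k ≤ m) : IsHGWalk E v e k :=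
  fun i hi => hw i (hi.trans_le hk)

theorem IsHGWalk.snoc [DecidableEq V] {v : ℕ → V} {e : ℕ → Finset V} {m : ℕ}
    (hw : IsHGWalk E v e m) {B : Finset V} {c : V} (hB : B ∈ E) (hm : v m ∈ B) (hc : c ∈ B) :
    IsHGWalk E (Function.update v (m + 1) c) (Function.update e m B) (m + 1) := by
  intro i hi
  rcases Nat.lt_succ_iff_lt_or_eq.1 hi with hi | rfl
  · simpa [Function.update_of_ne hi.ne, Function.update_of_ne (by omega : i ≠ m + 1),
      Function.update_of_ne (by omega : i + 1 ≠ m + 1)] using hw i hi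
  · simp [hB, hm, hc]

theorem exists_isHGWalk_of_reflTransGen {a b : V}
    (h : ReflTransGen (HGAdj E) a b) :
    ∃ (m : ℕ) (v : ℕ → V) (e : ℕ → Finset V), IsHGWalk E v e m ∧ v 0 = a ∧ v m = b := by
  classical
  induction h with
  | refl => exact ⟨0, fun _ => a, fun _ => ∅, fun _ hi => absurd hi (Nat.not_lt_zero _), rfl, rfl⟩
  | tail _ hbc ih =>
    obtain ⟨m, v, e, hw, h0, hm⟩ := ih
    obtain ⟨B, hB, hb, hc⟩ := hbc
    exact ⟨m + 1, _, _, hw.snoc hB (hm ▸ hb) hc, by simp [h0], by simp⟩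

/-- Replaces the steps `i, …, j` of the walk by the single step `v i ∈ e j ∋ v (j + 1)`. -/
theorem IsHGWalk.shortcut {v : ℕ → V} {e : ℕ → Finset V} {m : ℕ} (hw : IsHGWalk E v e m)
    {i j : ℕ} (hij : i ≤ j) (hjm : j < m) (hv : v i ∈ e j) :
    ∃ (v' : ℕ → V) (e' : ℕ → Finset V),
      IsHGWalk E v' e' (m - (j - i)) ∧ v' 0 = v 0 ∧ v' (m - (j - i)) = v m := by
  refine ⟨fun k => if k ≤ i then v k else v (k + (j - i)),
    fun k => if k < i then e k else e (k + (j - i)), ?_, by simp, ?_⟩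
  · intro k hk
    rcases Nat.lt_trichotomy k i with hki | rfl | hki
    · simpa [hki, hki.le, Nat.succ_le_of_lt hki] using hw k (by omega)
    · have hj := hw j hjm
      simp only [le_refl, if_true, lt_irrefl, if_false, show ¬ k + 1 ≤ k by omega,
        show k + 1 + (j - k) = j + 1 by omega, show k + (j - k) = j by omega]
      exact ⟨hj.1, hv, hj.2.2⟩
    · simpa [hki.not_gt, hki.not_ge, show ¬ k + 1 ≤ i by omega, Nat.add_right_comm]
        using hw (k + (j - i)) (by omega)
  · simp only [show ¬ m - (j - i) ≤ i by omega, if_false]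
    congr 1
    omega

theorem exists_isHGPath_of_reflTransGen {a b : V} (hab : a ≠ b)
    (h : ReflTransGen (HGAdj E) a b) :
    ∃ (m : ℕ) (v : ℕ → V) (e : ℕ → Finset V), 0 < m ∧ IsHGWalk E v e m ∧ v 0 = a ∧
      v m = b ∧ (Set.Iic m).InjOn v ∧ (Set.Iio m).InjOn e := by
  classical
  have hex := exists_isHGWalk_of_reflTransGen h
  obtain ⟨v, e, hw, h0, hm⟩ := Nat.find_spec hex
  set m := Nat.find hex
  have no_shortcut : ∀ i j, i < j → j < m → v i ∉ e j := by
    intro i j hij hjm hv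
    obtain ⟨v', e', hw', h0', hm'⟩ := hw.shortcut hij.le hjm hv
    exact Nat.find_min hex (show m - (j - i) < m by omega) ⟨v', e', hw', h0' ▸ h0, hm' ▸ hm⟩
  refine ⟨m, v, e, Nat.pos_of_ne_zero fun hm0 => hab (h0 ▸ hm ▸ hm0 ▸ rfl), hw, h0, hm,
    Set.injOn_of_lt_imp_ne fun i _ j hj hij hv => ?_,
    Set.injOn_of_lt_imp_ne fun i _ j hj hij he =>
      no_shortcut i j hij hj (he ▸ (hw i (hij.trans hj)).2.1)⟩
  rcases (Set.mem_Iic.1 hj).lt_or_eq with hjm | rfl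
  · exact no_shortcut i j hij hjm (hv ▸ (hw j hjm).2.1)
  · exact Nat.find_min hex hij ⟨v, e, hw.take hij.le, h0, hv.trans hm⟩

theorem mk_eq_mk_of_steps {v : ℕ → V} {e : ℕ → Finset V} {i j : ℕ} (hij : i ≤ j)
    (h : ∀ l, i ≤ l → l < j → e l ∈ E ∧ v l ∈ e l ∧ v (l + 1) ∈ e l) :
    Quot.mk (HGAdj E) (v i) = Quot.mk (HGAdj E) (v j) := by
  induction j, hij using Nat.le_induction with
  | base => rfl
  | succ j hij ih =>
    obtain ⟨he, hv, hv'⟩ := h j hij j.lt_succ_self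
    exact (ih fun l hil hlj => h l hil (hlj.trans j.lt_succ_self)).trans
      (Quot.sound ⟨e j, he, hv, hv'⟩)

theorem hasHGCycle_insert_of_isHGPath [DecidableEq V] {A : Finset V} (hAE : A ∉ E)
    {v : ℕ → V} {e : ℕ → Finset V} {m : ℕ} (hm : 0 < m) (hw : IsHGWalk E v e m)
    (hv : (Set.Iic m).InjOn v) (he : (Set.Iio m).InjOn e) (h0 : v 0 ∈ A) (hmA : v m ∈ A) :
    HasHGCycle (insert A E) := by
  have hne : ∀ i < m, e i ≠ A := fun i hi hiA => hAE (hiA ▸ (hw i hi).1)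
  refine hasHGCycle_iff_exists_isHGWalk.2 ⟨m + 1, Function.update v (m + 1) (v 0),
    Function.update e m A, by omega,
    (hw.mono (subset_insert A E)).snoc (mem_insert_self A E) hmA h0, by simp,
    fun i hi j hj hij => ?_, fun i hi j hj hij => ?_⟩
  · simp only [Set.mem_Iio] at hi hj
    simp only [Function.update_of_ne hi.ne, Function.update_of_ne hj.ne] at hij
    exact hv (Set.mem_Iic.2 (by omega)) (Set.mem_Iic.2 (by omega)) hij
  · simp only [Set.mem_Iio] at hi hj
    rcases Nat.lt_succ_iff_lt_or_eq.1 hi with hi | rfl <;>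
      rcases Nat.lt_succ_iff_lt_or_eq.1 hj with hj | rfl
    · simp only [Function.update_of_ne hi.ne, Function.update_of_ne hj.ne] at hij
      exact he hi hj hij
    · simp [Function.update_of_ne hi.ne, hne i hi] at hij
    · simp [Function.update_of_ne hj.ne, (hne j hj).symm] at hij
    · rfl

theorem hasHGCycle_insert_iff [DecidableEq V] {A : Finset V} (hAE : A ∉ E) :
    HasHGCycle (insert A E) ↔ HasHGCycle E ∨ ¬ Set.InjOn (Quot.mk (HGAdj E)) A := by
  constructor
  · rintro ⟨k, v, e, hk, he, hstep, hclose, hv, he'⟩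
    by_cases hA : ∃ i < k, e i = A
    · obtain ⟨i, hik, hiA⟩ := hA
      have hstepE : ∀ l < k, l ≠ i → e l ∈ E ∧ v l ∈ e l ∧ v (l + 1) ∈ e l :=
        fun l hl hli => ⟨(mem_insert.1 (he l hl)).resolve_left
          fun hlA => hli (he' l hl i hik (hlA.trans hiA.symm)), hstep l hl⟩
      have hback : Quot.mk (HGAdj E) (v (i + 1)) = Quot.mk (HGAdj E) (v i) := by
        rw [mk_eq_mk_of_steps hik fun l hl hlk => hstepE l hlk (by omega), hclose,
          mk_eq_mk_of_steps i.zero_le fun l _ hli => hstepE l (by omega) hli.ne]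
      have hvi : v i ≠ v (i + 1) := by
        intro hvi
        rcases (show i + 1 ≤ k by omega).lt_or_eq with hik' | hik'
        · exact absurd (hv i hik (i + 1) hik' hvi) (by omega)
        · rw [hik', hclose] at hvi
          exact absurd (hv i hik 0 (by omega) hvi) (by omega)
      exact Or.inr fun hinj => hvi <| hinj (by simpa [hiA] using (hstep i hik).1)
        (by simpa [hiA] using (hstep i hik).2) hback.symm
    · push Not at hA
      exact Or.inl ⟨k, v, e, hk, fun i hi => (mem_insert.1 (he i hi)).resolve_left (hA i hi),
        hstep, hclose, hv, he'⟩
  · rintro (hE | hinj)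
    · obtain ⟨k, v, e, hk, hw, hclose, hv, he⟩ := hasHGCycle_iff_exists_isHGWalk.1 hE
      exact hasHGCycle_iff_exists_isHGWalk.2
        ⟨k, v, e, hk, hw.mono (subset_insert A E), hclose, hv, he⟩
    · simp only [Set.InjOn, not_forall] at hinj
      obtain ⟨a, ha, b, hb, hab, hne⟩ := hinj
      obtain ⟨m, v, e, hm, hw, h0, hmb, hv, he⟩ :=
        exists_isHGPath_of_reflTransGen hne (quot_mk_hgAdj_eq_iff.1 hab)
      exact hasHGCycle_insert_of_isHGPath hAE hm hw hv he (h0 ▸ ha) (hmb ▸ hb)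

theorem card_quot_hgAdj_insert [DecidableEq V] [Finite V] {A : Finset V} (hA : A.Nonempty)
    [DecidableEq (Quot (HGAdj E))] :
    Nat.card (Quot (HGAdj (insert A E))) + #(A.image (Quot.mk (HGAdj E))) =
      Nat.card (Quot (HGAdj E)) + 1 := by
  have := Fintype.ofFinite (Quot (HGAdj E))
  have := Fintype.ofFinite (Quot (HGAdj (insert A E)))
  obtain ⟨a₀, ha₀⟩ := hA
  set T := A.image (Quot.mk (HGAdj E))
  have ha₀T : Quot.mk (HGAdj E) a₀ ∈ T := mem_image_of_mem _ ha₀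
  let lift : Quot (HGAdj E) → Quot (HGAdj (insert A E)) :=
    Quot.map id (HGAdj.mono (subset_insert A E))
  -- Adding `A` glues the classes in `T` into the class of `a₀` and leaves the others alone.
  let F : Quot (HGAdj E) → Quot (HGAdj E) := fun q => if q ∈ T then Quot.mk _ a₀ else q
  have hF : ∀ x y, HGAdj (insert A E) x y → F (Quot.mk _ x) = F (Quot.mk _ y) := by
    rintro x y ⟨B, hB, hx, hy⟩
    rcases mem_insert.1 hB with rfl | hB
    · simp only [F, if_pos (show Quot.mk (HGAdj E) x ∈ T from mem_image_of_mem _ hx),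
        if_pos (show Quot.mk (HGAdj E) y ∈ T from mem_image_of_mem _ hy)]
    · exact congrArg F (Quot.sound ⟨B, hB, hx, hy⟩)
  let g : Quot (HGAdj (insert A E)) → Quot (HGAdj E) := Quot.lift (F ∘ Quot.mk _) hF
  have hT : ∀ x, Quot.mk (HGAdj E) x ∈ T →
      Quot.mk (HGAdj (insert A E)) x = Quot.mk _ a₀ := by
    intro x hx
    obtain ⟨a, ha, hax⟩ := mem_image.1 hx
    exact (congrArg lift hax).symm.trans (Quot.sound ⟨A, mem_insert_self A E, ha, ha₀⟩)
  have hg : Function.Injective g := by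
    intro p q hpq
    induction p using Quot.ind with | mk x => ?_
    induction q using Quot.ind with | mk y => ?_
    change F (Quot.mk _ x) = F (Quot.mk _ y) at hpq
    by_cases hx : Quot.mk (HGAdj E) x ∈ T <;> by_cases hy : Quot.mk (HGAdj E) y ∈ T <;>
      simp only [F, hx, hy, if_true, if_false] at hpq
    · rw [hT x hx, hT y hy]
    · exact absurd (hpq ▸ ha₀T) hy
    · exact absurd (hpq ▸ ha₀T) hx
    · exact congrArg lift hpq
  have himage : univ.image g = insert (Quot.mk _ a₀) (univ \ T) := by
    ext q
    simp only [mem_image, mem_univ, true_and, mem_insert, mem_sdiff]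
    constructor
    · rintro ⟨p, rfl⟩
      induction p using Quot.ind with | mk x => ?_
      by_cases hx : Quot.mk (HGAdj E) x ∈ T
      · exact Or.inl (if_pos hx)
      · exact Or.inr (by simp [g, F, hx])
    · rintro (rfl | hq)
      · exact ⟨Quot.mk _ a₀, if_pos ha₀T⟩
      · induction q using Quot.ind with | mk x => exact ⟨Quot.mk _ x, if_neg hq⟩
  have hcard := card_image_of_injective univ hg
  rw [himage, card_insert_of_notMem (by simp [ha₀T]), card_univ_sdiff, card_univ] at hcard
  rw [Nat.card_eq_fintype_card, Nat.card_eq_fintype_card, ← hcard]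
  have := card_le_univ T
  omega

/-- For a graph (all edges of size two) this is the circuit rank `|E| - |V| + c`. -/
noncomputable def cyclomaticNumber (E : Finset (Finset V)) : ℤ :=
  ∑ A ∈ E, ((#A : ℤ) - 1) - Nat.card V + Nat.card (Quot (HGAdj E))

theorem cyclomaticNumber_empty : cyclomaticNumber (∅ : Finset (Finset V)) = 0 := by
  simp [cyclomaticNumber, card_quot_hgAdj_empty]

theorem cyclomaticNumber_insert [DecidableEq V] [Finite V] {A : Finset V} (hAE : A ∉ E)
    (hA : A.Nonempty) [DecidableEq (Quot (HGAdj E))] :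
    cyclomaticNumber (insert A E) =
      cyclomaticNumber E + (#A - #(A.image (Quot.mk (HGAdj E)))) := by
  have := card_quot_hgAdj_insert (E := E) hA
  simp only [cyclomaticNumber, sum_insert hAE]
  omega

theorem not_hasHGCycle_empty : ¬ HasHGCycle (∅ : Finset (Finset V)) :=
  fun ⟨_, _, e, hk, he, _⟩ => notMem_empty (e 0) (he 0 (by omega))

theorem cyclomaticNumber_nonneg_and_eq_zero_iff [DecidableEq V] [Finite V]
    (hE : ∀ A ∈ E, A.Nonempty) :
    0 ≤ cyclomaticNumber E ∧ (cyclomaticNumber E = 0 ↔ ¬ HasHGCycle E) := by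
  classical
  induction E using Finset.induction_on with
  | empty => simp [cyclomaticNumber_empty, not_hasHGCycle_empty]
  | insert A E hAE ih =>
    obtain ⟨ih₀, ih₁⟩ := ih fun B hB => hE B (mem_insert_of_mem hB)
    have hcard := card_image_le (s := A) (f := Quot.mk (HGAdj E))
    rw [cyclomaticNumber_insert hAE (hE A (mem_insert_self A E)), hasHGCycle_insert_iff hAE,
      ← card_image_iff, not_or, not_not, ← ih₁]
    omega

end

/-- For a hypergraph `G = (Fin n, E)` with all hyperedges of cardinality at least 2,
`∑_{A ∈ E} (|A| - 1) - |V| + c(G) ≥ 0`, where `c(G)` is the number of connected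
components (equivalence classes of vertices under connectivity); equality holds
if and only if `G` is a hyperforest, i.e. contains no hypercycle. -/
theorem hypergraph_euler_inequality (n : ℕ) (E : Finset (Finset (Fin n)))
    (hE : ∀ A ∈ E, 2 ≤ A.card) :
    0 ≤ (∑ A ∈ E, ((A.card : ℤ) - 1)) - n + Nat.card (Quot (HGAdj E)) ∧
    ((∑ A ∈ E, ((A.card : ℤ) - 1)) - n + Nat.card (Quot (HGAdj E)) = 0 ↔
      ¬ HasHGCycle E) := by
  have h := cyclomaticNumber_nonneg_and_eq_zero_iff fun A hA =>
    card_pos.1 (zero_lt_two.trans_le (hE A hA))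
  rwa [cyclomaticNumber, Nat.card_fin] at h
end
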